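/- For every real u ∈ [0,1], the limit D(u) := lim_{x→∞} (1/x) #{n ≤ x : n/σ(n) ≤ u} exists, and D(u) is a continuous function of u on [0,1]. In particular, the set of abundant numbers (positive integers n with σ(n) > 2n) possesses an asymptotic density. -/

import Mathlib

/-!
Put `f(n) = n/σ(n)`, so that `1/f(n) = σ(n)/n = ∑_{d ∣ n} 1/d`. Cutting this sum off at `d ≤ y`
gives a function of period `y!`, and as `∑_{n ≤ N} ∑_{d ∣ n, d > y} 1/d ≤ ∑_{d > y} N/d² ≤ 2N/y`,
`f` differs from the reciprocal of the truncated sum by more than `δ` only on a set of density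
`O(1/(yδ))`. If moreover `f` has no atoms (for each `t`, the set `{n : |f n - t| ≤ δ}` has
arbitrarily small upper density once `δ` is small), then `{f ≤ t}` agrees with a periodic set up
to a set of small upper density, hence has a density; the same estimate makes this density
continuous in `t` and equal to the density of `{f < t}`.

At `t ≤ 0` the atoms are controlled by the mean value `∑_{n ≤ N} σ(n)/n ≤ 2N`. For `t > 0` it
suffices to bound the atoms of `σ(n)/n`. Take a finite set `P` of primes `p ≥ K` with
`∑_{p ∈ P} 1/p` large. The `n` exactly divisible by no `p ∈ P` form a periodic set of density
`∏_{p ∈ P} (1 - 1/p + 1/p²) ≤ exp(-∑_{p ∈ P} 1/(2p))`, by the Chinese remainder theorem. If `p ∥ n`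
then `σ(n)/n = (1 + 1/p) σ(m)/m` with `m = n/p` and `σ(m)/m ≥ 1`, so two such `n` with the same `m`
but different `p` have values of `σ(n)/n` at least `min |1/p - 1/q|` apart: on the `n ≤ N` with
`σ(n)/n` in a short interval, `n ↦ n/p` is injective into `[1, N/K]`.
-/

open Filter ArithmeticFunction

/-- The ratio `n/σ(n)` as a real number. -/
noncomputable def sigmaRatio (n : ℕ) : ℝ := (n : ℝ) / ((sigma 1 n : ℕ) : ℝ)

open Finset Function Topology

theorem tendsto_div_of_abs_sub_mul_le {x : ℕ → ℝ} {l C : ℝ} (h : ∀ N : ℕ, |x N - N * l| ≤ C) :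
    Tendsto (fun N : ℕ => x N / N) atTop (𝓝 l) := by
  have hC : Tendsto (fun N : ℕ => C / N) atTop (𝓝 0) := tendsto_const_div_atTop_nhds_zero_nat C
  refine tendsto_iff_norm_sub_tendsto_zero.2
    (squeeze_zero' (.of_forall fun _ => norm_nonneg _) ?_ hC)
  filter_upwards [eventually_gt_atTop 0] with N hN
  have hN' : (0 : ℝ) < N := by exact_mod_cast hN
  rw [Real.norm_eq_abs, ← mul_div_cancel_left₀ l hN'.ne', ← sub_div, abs_div, Nat.abs_cast]
  gcongr
  exact h N

theorem cauchySeq_of_forall_eventually_dist_le {α ι : Type*} [PseudoMetricSpace α] [Nonempty ι]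
    [SemilatticeSup ι] {a : ι → α}
    (h : ∀ ε > 0, ∃ b : ι → α, CauchySeq b ∧ ∀ᶠ n in atTop, dist (a n) (b n) ≤ ε) :
    CauchySeq a := by
  refine Metric.cauchySeq_iff.2 fun ε hε => ?_
  obtain ⟨b, hb, hab⟩ := h (ε / 4) (by positivity)
  obtain ⟨N₁, hN₁⟩ := Metric.cauchySeq_iff.1 hb (ε / 4) (by positivity)
  obtain ⟨N₂, hN₂⟩ := eventually_atTop.1 hab
  refine ⟨N₁ ⊔ N₂, fun m hm n hn => ?_⟩
  have h₁ := hN₂ m (le_sup_right.trans hm)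
  have h₂ := hN₂ n (le_sup_right.trans hn)
  have h₃ := hN₁ m (le_sup_left.trans hm) n (le_sup_left.trans hn)
  calc dist (a m) (a n) ≤ dist (a m) (b m) + dist (b m) (b n) + dist (b n) (a n) :=
        dist_triangle4 _ _ _ _
    _ < ε := by rw [dist_comm (b n)]; linarith

theorem Finset.exists_pos_forall_lt {ι : Type*} (s : Finset ι) {f : ι → ℝ}
    (hf : ∀ i ∈ s, 0 < f i) : ∃ δ > 0, ∀ i ∈ s, δ < f i := by
  have hev : ∀ᶠ δ in 𝓝[>] (0 : ℝ), ∀ i ∈ s, δ < f i :=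
    ((eventually_all_finset s).2 fun i hi => eventually_lt_nhds (hf i hi)).filter_mono
      nhdsWithin_le_nhds
  obtain ⟨δ, hδ, hpos⟩ := (hev.and self_mem_nhdsWithin).exists
  exact ⟨δ, hpos, hδ⟩

theorem abs_sub_le_of_not_le_iff_le_left {x y t : ℝ} (h : ¬(x ≤ t ↔ y ≤ t)) :
    |x - t| ≤ |x - y| := by
  grind [abs_le, le_abs]

theorem abs_sub_le_of_not_le_iff_le_right {x s t : ℝ} (h : ¬(x ≤ s ↔ x ≤ t)) :
    |x - t| ≤ |s - t| := by
  grind [abs_le, le_abs]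

theorem abs_inv_sub_inv_le_sub {a b : ℝ} (ha : 1 ≤ a) (hab : a ≤ b) : |b⁻¹ - a⁻¹| ≤ b - a := by
  have ha0 : 0 < a := one_pos.trans_le ha
  have hb0 : 0 < b := ha0.trans_le hab
  rw [inv_sub_inv hb0.ne' ha0.ne', abs_div, abs_sub_comm, abs_of_nonneg (sub_nonneg.2 hab),
    abs_of_pos (mul_pos hb0 ha0)]
  exact div_le_self (sub_nonneg.2 hab) (by nlinarith)

theorem abs_inv_sub_inv_le_of_abs_sub_le {r u δ : ℝ} (hu : 0 < u) (hδ : δ ≤ u / 2)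
    (hr : |r - u| ≤ δ) : |r⁻¹ - u⁻¹| ≤ 2 * δ / u ^ 2 := by
  have hr0 : u / 2 ≤ r := by linarith [(abs_le.1 hr).1]
  have hru : 0 < r * u := by nlinarith
  rw [inv_sub_inv (by linarith) hu.ne', abs_div, abs_sub_comm, abs_of_pos hru,
    div_le_div_iff₀ hru (by positivity)]
  have hδ0 : 0 ≤ δ := (abs_nonneg _).trans hr
  calc |r - u| * u ^ 2 ≤ δ * u ^ 2 := by gcongr
    _ ≤ 2 * δ * (r * u) := by
        nlinarith [mul_nonneg (mul_nonneg hδ0 hu.le) (by linarith : 0 ≤ 2 * r - u)]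

namespace Davenport

section Counting

open Classical in
noncomputable def countUpTo (S : ℕ → Prop) (N : ℕ) : ℕ := #{n ∈ Icc 1 N | S n}

noncomputable def densityUpTo (S : ℕ → Prop) (N : ℕ) : ℝ := countUpTo S N / N

variable {S T U : ℕ → Prop}

theorem countUpTo_le (S : ℕ → Prop) (N : ℕ) : countUpTo S N ≤ N := by
  classical
  exact (card_filter_le _ _).trans (by simp)

theorem countUpTo_mono (h : ∀ n, 0 < n → S n → T n) (N : ℕ) :
    countUpTo S N ≤ countUpTo T N := by
  classical
  refine card_le_card fun n hn => ?_
  simp only [mem_filter, mem_Icc] at hn ⊢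
  exact ⟨hn.1, h n hn.1.1 hn.2⟩

theorem countUpTo_add_countUpTo_not (S : ℕ → Prop) (N : ℕ) :
    countUpTo S N + countUpTo (fun n => ¬S n) N = N := by
  classical
  rw [countUpTo, countUpTo, card_filter_add_card_filter_not]
  simp

theorem countUpTo_dvd (d N : ℕ) : countUpTo (d ∣ ·) N = N / d := by
  rw [← Nat.Ioc_filter_dvd_card_eq_div, ← Icc_add_one_left_eq_Ioc, zero_add, countUpTo]
  congr

theorem countUpTo_and_not (h : ∀ n, T n → S n) (N : ℕ) :
    countUpTo (fun n => S n ∧ ¬T n) N = countUpTo S N - countUpTo T N := by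
  classical
  have hsub : {n ∈ Icc 1 N | T n} ⊆ {n ∈ Icc 1 N | S n} := monotone_filter_right _ fun n _ => h n
  rw [countUpTo, countUpTo, countUpTo, ← card_sdiff_of_subset hsub, ← filter_and_not]
  congr

theorem countUpTo_le_add (h : ∀ n, 0 < n → S n → T n ∨ U n) (N : ℕ) :
    countUpTo S N ≤ countUpTo T N + countUpTo U N := by
  classical
  refine (card_le_card fun n hn => ?_).trans (card_union_le _ _)
  simp only [mem_filter, mem_Icc, mem_union] at hn ⊢
  exact (h n hn.1.1 hn.2).imp (⟨hn.1, ·⟩) (⟨hn.1, ·⟩)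

theorem countUpTo_eq_count_of_periodic [DecidablePred S] {L : ℕ} (hS : Periodic S L) :
    countUpTo S L = Nat.count S L := by
  rw [countUpTo, ← Nat.filter_Ico_card_eq_of_periodic 1 L S hS, add_comm, Ico_add_one_right_eq_Icc]
  congr

theorem countUpTo_add_period {L : ℕ} (hS : Periodic S L) (N : ℕ) :
    countUpTo S (N + L) = countUpTo S N + countUpTo S L := by
  classical
  have hsplit : Icc 1 (N + L) = Icc 1 N ∪ Ico (N + 1) (N + 1 + L) := by
    ext n; simp only [mem_union, mem_Icc, mem_Ico]; omega
  have hdisj : Disjoint (Icc 1 N) (Ico (N + 1) (N + 1 + L)) := by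
    simp only [disjoint_left, mem_Icc, mem_Ico]; omega
  rw [countUpTo_eq_count_of_periodic hS, ← Nat.filter_Ico_card_eq_of_periodic (N + 1) L S hS]
  simp only [countUpTo, hsplit, filter_union, card_union_of_disjoint (disjoint_filter_filter hdisj)]

theorem tendsto_densityUpTo_of_periodic {L : ℕ} (hS : Periodic S L) (hL : 0 < L) :
    Tendsto (densityUpTo S) atTop (𝓝 (countUpTo S L / L)) := by
  refine tendsto_div_of_abs_sub_mul_le (C := L) fun N => ?_
  have hblocks : ∀ q r, countUpTo S (r + q * L) = countUpTo S r + q * countUpTo S L := by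
    intro q r
    induction q with
    | zero => simp
    | succ q ih => rw [add_mul, one_mul, ← add_assoc, countUpTo_add_period hS, ih]; ring
  have hN : N = N % L + N / L * L := (Nat.mod_add_div' N L).symm
  have hL' : (0 : ℝ) < L := by exact_mod_cast hL
  have hr : ((N % L : ℕ) : ℝ) < L := by exact_mod_cast Nat.mod_lt N hL
  have hcr : (countUpTo S (N % L) : ℝ) ≤ (N % L : ℕ) := by exact_mod_cast countUpTo_le S (N % L)
  have hrc : ((N % L : ℕ) : ℝ) * (countUpTo S L / L) ≤ (N % L : ℕ) :=
    mul_le_of_le_one_right (by positivity)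
      (div_le_one_of_le₀ (by exact_mod_cast countUpTo_le S L) hL'.le)
  have hrc₀ : 0 ≤ ((N % L : ℕ) : ℝ) * (countUpTo S L / L) := by positivity
  rw [hN, hblocks]
  push_cast
  rw [add_mul, mul_assoc, mul_div_cancel₀ _ hL'.ne', abs_le]
  constructor <;> linarith [(Nat.cast_nonneg (α := ℝ) (countUpTo S (N % L)))]

theorem densityUpTo_eq_card_div (S : ℕ → Prop) [DecidablePred S] :
    densityUpTo S = fun N => (#{n ∈ Icc 1 N | S n} : ℝ) / N := by
  ext N
  rw [densityUpTo, countUpTo]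
  congr

theorem densityUpTo_mono (h : ∀ n, 0 < n → S n → T n) (N : ℕ) :
    densityUpTo S N ≤ densityUpTo T N := by
  unfold densityUpTo
  gcongr
  exact_mod_cast countUpTo_mono h N

theorem densityUpTo_congr (h : ∀ n, 0 < n → (S n ↔ T n)) : densityUpTo S = densityUpTo T :=
  funext fun N => le_antisymm (densityUpTo_mono (fun n hn => (h n hn).1) N)
    (densityUpTo_mono (fun n hn => (h n hn).2) N)

theorem densityUpTo_le_add (h : ∀ n, 0 < n → S n → T n ∨ U n) (N : ℕ) :
    densityUpTo S N ≤ densityUpTo T N + densityUpTo U N := by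
  rw [densityUpTo, densityUpTo, densityUpTo, ← add_div]
  gcongr
  exact_mod_cast countUpTo_le_add h N

theorem abs_densityUpTo_sub_le (h : ∀ n, 0 < n → ¬(S n ↔ T n) → U n) (N : ℕ) :
    |densityUpTo S N - densityUpTo T N| ≤ densityUpTo U N := by
  rw [abs_sub_le_iff, sub_le_iff_le_add', sub_le_iff_le_add']
  constructor <;> refine densityUpTo_le_add (fun n hn hs => ?_) N
  · exact (em (T n)).imp_right fun ht => h n hn (by tauto)
  · exact (em (S n)).imp_right fun hs' => h n hn (by tauto)

theorem densityUpTo_mul_le_sum_div {h : ℕ → ℝ} (hh : ∀ n, 0 < n → 0 ≤ h n) (δ : ℝ) (N : ℕ) :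
    densityUpTo (fun n => δ ≤ h n) N * δ ≤ (∑ n ∈ Icc 1 N, h n) / N := by
  classical
  have hcount : (countUpTo (fun n => δ ≤ h n) N : ℝ) * δ ≤ ∑ n ∈ Icc 1 N, h n := by
    calc (countUpTo (fun n => δ ≤ h n) N : ℝ) * δ = #{n ∈ Icc 1 N | δ ≤ h n} • δ := by
          rw [nsmul_eq_mul, countUpTo]
      _ ≤ ∑ n ∈ Icc 1 N with δ ≤ h n, h n := card_nsmul_le_sum _ _ _ fun n hn => (mem_filter.1 hn).2
      _ ≤ ∑ n ∈ Icc 1 N, h n := sum_le_sum_of_subset_of_nonneg (filter_subset _ _)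
          fun n hn _ => hh n (mem_Icc.1 hn).1
  rw [densityUpTo, div_mul_eq_mul_div]
  gcongr

end Counting

section Distribution

def HasNoAtoms (f : ℕ → ℝ) : Prop :=
  ∀ t ε : ℝ, 0 < ε → ∃ δ > 0, ∀ᶠ N in atTop, densityUpTo (fun n => |f n - t| ≤ δ) N ≤ ε

def IsPeriodicallyApproximable (f : ℕ → ℝ) : Prop :=
  ∀ δ ε : ℝ, 0 < δ → 0 < ε → ∃ φ : ℕ → ℝ, ∃ L, 0 < L ∧ Periodic φ L ∧
    ∀ᶠ N in atTop, densityUpTo (fun n => δ < |f n - φ n|) N ≤ ε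

noncomputable def distribution (f : ℕ → ℝ) (t : ℝ) : ℝ :=
  limUnder atTop (densityUpTo fun n => f n ≤ t)

variable {f : ℕ → ℝ}

theorem cauchySeq_densityUpTo_le (hφ : IsPeriodicallyApproximable f) (hf : HasNoAtoms f)
    (t : ℝ) : CauchySeq (densityUpTo fun n => f n ≤ t) := by
  classical
  refine cauchySeq_of_forall_eventually_dist_le fun ε hε => ?_
  obtain ⟨δ, hδ, hatom⟩ := hf t (ε / 2) (half_pos hε)
  obtain ⟨φ, L, hL, hφL, happrox⟩ := hφ δ (ε / 2) hδ (half_pos hε)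
  refine ⟨densityUpTo fun n => φ n ≤ t,
    (tendsto_densityUpTo_of_periodic (hφL.comp (· ≤ t)) hL).cauchySeq, ?_⟩
  filter_upwards [hatom, happrox] with N h₁ h₂
  rw [Real.dist_eq]
  calc _ ≤ densityUpTo (fun n => δ < |f n - φ n| ∨ |f n - t| ≤ δ) N :=
        abs_densityUpTo_sub_le (fun n _ h => or_iff_not_imp_left.2 fun h' =>
          (abs_sub_le_of_not_le_iff_le_left h).trans (not_lt.1 h')) N
    _ ≤ _ := densityUpTo_le_add (fun _ _ => Or.symm) N
    _ ≤ ε := by linarith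

theorem tendsto_densityUpTo_le_distribution (hφ : IsPeriodicallyApproximable f) (hf : HasNoAtoms f)
    (t : ℝ) :
    Tendsto (densityUpTo fun n => f n ≤ t) atTop (𝓝 (distribution f t)) :=
  tendsto_nhds_limUnder (cauchySeq_tendsto_of_complete (cauchySeq_densityUpTo_le hφ hf t))

theorem tendsto_densityUpTo_lt_distribution (hφ : IsPeriodicallyApproximable f) (hf : HasNoAtoms f)
    (t : ℝ) :
    Tendsto (densityUpTo fun n => f n < t) atTop (𝓝 (distribution f t)) := by
  have hdiff : Tendsto (fun N => densityUpTo (fun n => f n < t) N -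
      densityUpTo (fun n => f n ≤ t) N) atTop (𝓝 0) := by
    refine Metric.tendsto_nhds.2 fun ε hε => ?_
    obtain ⟨δ, hδ, hatom⟩ := hf t (ε / 2) (half_pos hε)
    filter_upwards [hatom] with N hN
    rw [Real.dist_0_eq_abs]
    calc _ ≤ densityUpTo (fun n => |f n - t| ≤ δ) N := abs_densityUpTo_sub_le (fun n _ h => by
          rw [show f n = t by contrapose! h; exact ⟨le_of_lt, fun h' => lt_of_le_of_ne h' h⟩]
          simpa using hδ.le) N
      _ < ε := by linarith
  simpa using hdiff.add (tendsto_densityUpTo_le_distribution hφ hf t)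

theorem continuous_distribution (hφ : IsPeriodicallyApproximable f) (hf : HasNoAtoms f) :
    Continuous (distribution f) := by
  refine Metric.continuous_iff.2 fun t ε hε => ?_
  obtain ⟨δ, hδ, hatom⟩ := hf t (ε / 2) (half_pos hε)
  refine ⟨δ, hδ, fun s hs => ?_⟩
  rw [Real.dist_eq] at hs ⊢
  have hlim := ((tendsto_densityUpTo_le_distribution hφ hf s).sub
    (tendsto_densityUpTo_le_distribution hφ hf t)).abs
  have : |distribution f s - distribution f t| ≤ ε / 2 := by
    refine le_of_tendsto hlim ?_
    filter_upwards [hatom] with N hN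
    exact (abs_densityUpTo_sub_le (fun n _ h =>
      (abs_sub_le_of_not_le_iff_le_right h).trans hs.le) N).trans hN
  linarith

end Distribution

section Abundancy

noncomputable def abundancy (n : ℕ) : ℝ := ∑ d ∈ n.divisors, (d : ℝ)⁻¹

theorem abundancy_eq_sigma_div (n : ℕ) : abundancy n = (sigma 1 n : ℕ) / n := by
  rcases eq_or_ne n 0 with rfl | hn
  · simp [abundancy]
  rw [abundancy, ← Nat.sum_div_divisors, sigma_one_apply, Nat.cast_sum, sum_div]
  refine sum_congr rfl fun d hd => ?_
  have hd0 : (d : ℝ) ≠ 0 := by exact_mod_cast (Nat.pos_of_mem_divisors hd).ne'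
  rw [Nat.cast_div (Nat.dvd_of_mem_divisors hd) hd0, inv_div]

theorem sigmaRatio_eq_inv_abundancy (n : ℕ) : sigmaRatio n = (abundancy n)⁻¹ := by
  rw [abundancy_eq_sigma_div, inv_div, sigmaRatio]

theorem one_le_abundancy {n : ℕ} (hn : n ≠ 0) : 1 ≤ abundancy n := by
  simpa [abundancy] using single_le_sum (f := fun d : ℕ => (d : ℝ)⁻¹) (fun _ _ => by positivity)
    (Nat.one_mem_divisors.2 hn)

theorem abundancy_prime_mul {p m : ℕ} (hp : p.Prime) (hpm : ¬p ∣ m) :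
    abundancy (p * m) = (1 + (p : ℝ)⁻¹) * abundancy m := by
  have hσ : sigma 1 (p * m) = (1 + p) * sigma 1 m := by
    rw [isMultiplicative_sigma.map_mul_of_coprime ((Nat.Prime.coprime_iff_not_dvd hp).2 hpm),
      sigma_one_apply, hp.divisors, sum_pair hp.one_lt.ne]
  have hp0 : (p : ℝ) ≠ 0 := by exact_mod_cast hp.ne_zero
  rw [abundancy_eq_sigma_div, abundancy_eq_sigma_div, hσ]
  push_cast
  field_simp
  ring

-- Summing over `d ∈ [1, y]` rather than over `n.divisors` keeps the period `y!` at `n = 0`.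
noncomputable def truncatedAbundancy (y n : ℕ) : ℝ := ∑ d ∈ Icc 1 y with d ∣ n, (d : ℝ)⁻¹

theorem truncatedAbundancy_zero_left (n : ℕ) : truncatedAbundancy 0 n = 0 := by
  simp [truncatedAbundancy]

theorem truncatedAbundancy_periodic (y : ℕ) : Periodic (truncatedAbundancy y) y.factorial := by
  intro n
  refine sum_congr (filter_congr fun d hd => ?_) fun _ _ => rfl
  rw [mem_Icc] at hd
  exact Nat.dvd_add_left (Nat.dvd_factorial hd.1 hd.2)

theorem one_le_truncatedAbundancy {y : ℕ} (hy : 0 < y) (n : ℕ) : 1 ≤ truncatedAbundancy y n := by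
  simpa [truncatedAbundancy] using single_le_sum (f := fun d : ℕ => (d : ℝ)⁻¹)
    (fun _ _ => by positivity) (mem_filter.2 ⟨mem_Icc.2 ⟨le_rfl, hy⟩, one_dvd n⟩)

theorem abundancy_sub_truncatedAbundancy {n : ℕ} (hn : n ≠ 0) (y : ℕ) :
    abundancy n - truncatedAbundancy y n = ∑ d ∈ n.divisors with y < d, (d : ℝ)⁻¹ := by
  rw [sub_eq_iff_eq_add', abundancy, ← sum_filter_not_add_sum_filter _ (y < ·)]
  congr 1
  refine sum_congr ?_ fun _ _ => rfl
  ext d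
  simp only [mem_filter, Nat.mem_divisors, mem_Icc, not_lt]
  constructor
  · rintro ⟨⟨hd, -⟩, hdy⟩
    exact ⟨⟨Nat.pos_of_dvd_of_pos hd (Nat.pos_of_ne_zero hn), hdy⟩, hd⟩
  · rintro ⟨⟨-, hdy⟩, hd⟩
    exact ⟨⟨hd, hn⟩, hdy⟩

theorem truncatedAbundancy_le_abundancy {n : ℕ} (hn : n ≠ 0) (y : ℕ) :
    truncatedAbundancy y n ≤ abundancy n := by
  have := abundancy_sub_truncatedAbundancy hn y
  have : 0 ≤ ∑ d ∈ n.divisors with y < d, (d : ℝ)⁻¹ := sum_nonneg fun _ _ => by positivity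
  linarith

theorem sum_abundancy_sub_truncatedAbundancy_le (y N : ℕ) :
    ∑ n ∈ Icc 1 N, (abundancy n - truncatedAbundancy y n) ≤ 2 / (y + 1) * N := by
  have hswap : ∑ n ∈ Icc 1 N, ∑ d ∈ n.divisors with y < d, (d : ℝ)⁻¹ =
      ∑ d ∈ Icc 1 N with y < d, ∑ n ∈ Icc 1 N with d ∣ n, (d : ℝ)⁻¹ := by
    refine sum_comm' fun n d => ?_
    simp only [mem_Icc, mem_filter, Nat.mem_divisors]
    constructor
    · rintro ⟨⟨hn1, hnN⟩, ⟨hd, -⟩, hyd⟩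
      exact ⟨⟨⟨hn1, hnN⟩, hd⟩,
        ⟨Nat.pos_of_dvd_of_pos hd hn1, (Nat.le_of_dvd hn1 hd).trans hnN⟩, hyd⟩
    · rintro ⟨⟨⟨hn1, hnN⟩, hd⟩, -, hyd⟩
      exact ⟨⟨hn1, hnN⟩, ⟨hd, by omega⟩, hyd⟩
  rw [sum_congr rfl fun n hn => abundancy_sub_truncatedAbundancy (by grind) y, hswap]
  calc ∑ d ∈ Icc 1 N with y < d, ∑ n ∈ Icc 1 N with d ∣ n, (d : ℝ)⁻¹
      = ∑ d ∈ Icc 1 N with y < d, ((N / d : ℕ) : ℝ) * (d : ℝ)⁻¹ := by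
        refine sum_congr rfl fun d _ => ?_
        rw [sum_const, nsmul_eq_mul, ← countUpTo_dvd, countUpTo]
        congr
    _ ≤ ∑ d ∈ Icc 1 N with y < d, (N : ℝ) * ((d : ℝ) ^ 2)⁻¹ := by
        refine sum_le_sum fun d _ => ?_
        calc ((N / d : ℕ) : ℝ) * (d : ℝ)⁻¹ ≤ (N / d : ℝ) * (d : ℝ)⁻¹ := by
              gcongr; exact Nat.cast_div_le
          _ = N * ((d : ℝ) ^ 2)⁻¹ := by ring
    _ ≤ N * ∑ d ∈ Ioo y (N + 1), ((d : ℝ) ^ 2)⁻¹ := by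
        rw [← mul_sum]
        gcongr
        intro d hd
        simp only [mem_filter, mem_Icc, mem_Ioo] at hd ⊢
        omega
    _ ≤ N * (2 / (y + 1)) := by gcongr; exact sum_Ioo_inv_sq_le y (N + 1)
    _ = 2 / (y + 1) * N := mul_comm _ _

theorem sum_abundancy_le (N : ℕ) : ∑ n ∈ Icc 1 N, abundancy n ≤ 2 * N := by
  simpa [truncatedAbundancy_zero_left] using sum_abundancy_sub_truncatedAbundancy_le 0 N

end Abundancy

section PowerfulOn

theorem countUpTo_and_of_coprime {S T : ℕ → Prop} {M N : ℕ}
    (hMN : M.Coprime N) (hS : Periodic S M) (hT : Periodic T N) :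
    countUpTo (fun n => S n ∧ T n) (M * N) = countUpTo S M * countUpTo T N := by
  classical
  rcases M.eq_zero_or_pos with rfl | hM
  · simp [countUpTo]
  rcases N.eq_zero_or_pos with rfl | hN
  · simp [countUpTo]
  have hS' : Periodic S (M * N) := by simpa [mul_comm] using hS.nat_mul N
  have hT' : Periodic T (M * N) := by simpa using hT.nat_mul M
  have hST : Periodic (fun n => S n ∧ T n) (M * N) := fun n => by simp only [hS' n, hT' n]
  rw [countUpTo_eq_count_of_periodic hS, countUpTo_eq_count_of_periodic hT,
    countUpTo_eq_count_of_periodic hST]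
  simp only [Nat.count_eq_card_filter_range, ← card_product, ← filter_product]
  have hcrt : ∀ x : ℕ × ℕ, x.1 < M → x.2 < N →
      Nat.chineseRemainder hMN x.1 x.2 % M = x.1 ∧ Nat.chineseRemainder hMN x.1 x.2 % N = x.2 :=
    fun x h₁ h₂ => ⟨Eq.trans (Nat.chineseRemainder hMN x.1 x.2).2.1 (Nat.mod_eq_of_lt h₁),
      Eq.trans (Nat.chineseRemainder hMN x.1 x.2).2.2 (Nat.mod_eq_of_lt h₂)⟩
  refine card_nbij' (fun n => (n % M, n % N)) (fun x => Nat.chineseRemainder hMN x.1 x.2)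
    (fun n hn => ?_) (fun x hx => ?_) (fun n hn => ?_) (fun x hx => ?_) <;>
    simp only [coe_filter, mem_range, Set.mem_ofPred_eq, mem_product] at *
  · exact ⟨⟨Nat.mod_lt n hM, Nat.mod_lt n hN⟩, hS.map_mod_nat n ▸ hn.2.1,
      hT.map_mod_nat n ▸ hn.2.2⟩
  · obtain ⟨hcM, hcN⟩ := hcrt x hx.1.1 hx.1.2
    refine ⟨Nat.chineseRemainder_lt_mul hMN _ _ hM.ne' hN.ne', ?_, ?_⟩
    · rw [← hS.map_mod_nat, hcM]; exact hx.2.1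
    · rw [← hT.map_mod_nat, hcN]; exact hx.2.2
  · exact (Nat.chineseRemainder_modEq_unique hMN (Nat.mod_modEq n M).symm
      (Nat.mod_modEq n N).symm).symm.eq_of_lt_of_lt
      (Nat.chineseRemainder_lt_mul hMN _ _ hM.ne' hN.ne') hn.1
  · exact Prod.ext (hcrt x hx.1.1 hx.1.2).1 (hcrt x hx.1.1 hx.1.2).2

def IsPowerfulOn (P : Finset ℕ) (n : ℕ) : Prop := ∀ p ∈ P, p ∣ n → p ^ 2 ∣ n

theorem isPowerfulOn_periodic (P : Finset ℕ) : Periodic (IsPowerfulOn P) (∏ p ∈ P, p ^ 2) := by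
  intro n
  have hdvd : ∀ p ∈ P, ∀ k, k ∣ p ^ 2 → (k ∣ n + ∏ p ∈ P, p ^ 2 ↔ k ∣ n) :=
    fun p hp k hk => Nat.dvd_add_left (hk.trans (dvd_prod_of_mem _ hp))
  refine propext (forall₂_congr fun p hp => ?_)
  rw [hdvd p hp p (dvd_pow_self p two_ne_zero), hdvd p hp _ dvd_rfl]

theorem countUpTo_isPowerfulOn_singleton {p : ℕ} (hp : p.Prime) :
    countUpTo (IsPowerfulOn {p}) (p ^ 2) = p ^ 2 - p + 1 := by
  have hnot : countUpTo (fun n => ¬IsPowerfulOn {p} n) (p ^ 2) = p - 1 := by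
    have h := countUpTo_and_not (S := (p ∣ ·)) (T := (p ^ 2 ∣ ·))
      (fun _ => (dvd_pow_self p two_ne_zero).trans) (p ^ 2)
    have hp2 : p ^ 2 / p = p := by rw [pow_two, Nat.mul_div_cancel _ hp.pos]
    rw [countUpTo_dvd, countUpTo_dvd, Nat.div_self (pow_pos hp.pos 2), hp2] at h
    simpa [IsPowerfulOn] using h
  have hsum := countUpTo_add_countUpTo_not (IsPowerfulOn {p}) (p ^ 2)
  have hp2 : p ≤ p ^ 2 := Nat.le_self_pow two_ne_zero p
  have := hp.pos
  omega

theorem countUpTo_isPowerfulOn {P : Finset ℕ} (hP : ∀ p ∈ P, p.Prime) :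
    countUpTo (IsPowerfulOn P) (∏ p ∈ P, p ^ 2) = ∏ p ∈ P, (p ^ 2 - p + 1) := by
  classical
  induction P using Finset.induction_on with
  | empty => simp [countUpTo, IsPowerfulOn]
  | @insert q P hqP ih =>
    have hq := hP q (mem_insert_self q P)
    have hP' : ∀ p ∈ P, p.Prime := fun p hp => hP p (mem_insert_of_mem hp)
    have hcop : (q ^ 2).Coprime (∏ p ∈ P, p ^ 2) :=
      Nat.Coprime.prod_right fun p hp => Nat.Coprime.pow 2 2
        ((Nat.coprime_primes hq (hP' p hp)).2 fun h => hqP (h ▸ hp))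
    have hins : IsPowerfulOn (insert q P) = fun n => IsPowerfulOn {q} n ∧ IsPowerfulOn P n := by
      ext n
      simp [IsPowerfulOn]
    rw [prod_insert hqP, prod_insert hqP, hins,
      countUpTo_and_of_coprime hcop (by simpa using isPowerfulOn_periodic {q})
        (isPowerfulOn_periodic P), countUpTo_isPowerfulOn_singleton hq, ih hP']

theorem countUpTo_isPowerfulOn_div_le {P : Finset ℕ} (hP : ∀ p ∈ P, p.Prime) :
    (countUpTo (IsPowerfulOn P) (∏ p ∈ P, p ^ 2) : ℝ) / (∏ p ∈ P, p ^ 2 : ℕ) ≤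
      Real.exp (-(∑ p ∈ P, (p : ℝ)⁻¹) / 2) := by
  have hsum : -(∑ p ∈ P, (p : ℝ)⁻¹) / 2 = ∑ p ∈ P, -((p : ℝ)⁻¹ / 2) := by
    rw [sum_neg_distrib, neg_div, sum_div]
  rw [countUpTo_isPowerfulOn hP, Nat.cast_prod, Nat.cast_prod, ← prod_div_distrib, hsum,
    Real.exp_sum]
  refine prod_le_prod (fun p hp => by have := (hP p hp).pos; positivity) fun p hp => ?_
  have hp2 : (2 : ℝ) ≤ p := by exact_mod_cast (hP p hp).two_le
  calc ((p ^ 2 - p + 1 : ℕ) : ℝ) / (p ^ 2 : ℕ) ≤ 1 - (p : ℝ)⁻¹ / 2 := by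
        rw [Nat.cast_add, Nat.cast_sub (Nat.le_self_pow two_ne_zero p),
          div_le_iff₀ (by have := (hP p hp).pos; positivity)]
        have : (1 - (p : ℝ)⁻¹ / 2) * (p ^ 2 : ℕ) = p ^ 2 - p / 2 := by
          push_cast
          field_simp
        rw [this]
        push_cast
        linarith
    _ ≤ Real.exp (-((p : ℝ)⁻¹ / 2)) := Real.one_sub_le_exp_neg _

end PowerfulOn

section Atoms

theorem exists_finset_primes_le_sum_inv (K : ℕ) (A : ℝ) :
    ∃ P : Finset ℕ, (∀ p ∈ P, p.Prime ∧ K ≤ p) ∧ A ≤ ∑ p ∈ P, (p : ℝ)⁻¹ := by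
  classical
  by_contra! h
  refine not_summable_one_div_on_primes (summable_of_sum_le (c := A + K)
    (fun n => Set.indicator_nonneg (fun _ _ => by positivity) n) fun u => ?_)
  have hsmall : ∑ n ∈ u with n.Prime ∧ ¬K ≤ n, (n : ℝ)⁻¹ ≤ K := by
    calc _ ≤ #{n ∈ u | n.Prime ∧ ¬K ≤ n} • (1 : ℝ) := sum_le_card_nsmul _ _ _ fun n hn =>
          inv_le_one_of_one_le₀ (by exact_mod_cast (mem_filter.1 hn).2.1.one_lt.le)
      _ ≤ #(range K) • (1 : ℝ) := by
          gcongr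
          intro n hn
          simp only [mem_filter, mem_range] at hn ⊢
          omega
      _ = K := by simp
  calc ∑ n ∈ u, {p | p.Prime}.indicator (fun n : ℕ => 1 / (n : ℝ)) n
      = ∑ n ∈ u with n.Prime, (n : ℝ)⁻¹ := by
        rw [sum_filter]
        exact sum_congr rfl fun n _ => by simp [Set.indicator_apply]
    _ = ∑ n ∈ u with n.Prime ∧ K ≤ n, (n : ℝ)⁻¹ + ∑ n ∈ u with n.Prime ∧ ¬K ≤ n, (n : ℝ)⁻¹ := by
        rw [← sum_filter_add_sum_filter_not _ (K ≤ ·), filter_filter, filter_filter]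
    _ ≤ A + K := add_le_add (h _ fun p hp => (mem_filter.1 hp).2).le hsmall

theorem exists_primes_density_isPowerfulOn_lt (K : ℕ) {ε : ℝ} (hε : 0 < ε) :
    ∃ P : Finset ℕ, (∀ p ∈ P, p.Prime ∧ K ≤ p) ∧
      (countUpTo (IsPowerfulOn P) (∏ p ∈ P, p ^ 2) : ℝ) / (∏ p ∈ P, p ^ 2 : ℕ) < ε := by
  obtain ⟨P, hP, hPsum⟩ := exists_finset_primes_le_sum_inv K (2 * ε⁻¹)
  refine ⟨P, hP, ?_⟩
  calc _ ≤ Real.exp (-(∑ p ∈ P, (p : ℝ)⁻¹) / 2) :=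
        countUpTo_isPowerfulOn_div_le fun p hp => (hP p hp).1
    _ ≤ Real.exp (-ε⁻¹) := by gcongr; linarith
    _ = (Real.exp ε⁻¹)⁻¹ := Real.exp_neg _
    _ ≤ (ε⁻¹ + 1)⁻¹ := inv_anti₀ (by positivity) (Real.add_one_le_exp _)
    _ < ε⁻¹⁻¹ := inv_strictAnti₀ (by positivity) (by linarith)
    _ = ε := inv_inv ε

theorem abs_inv_sub_inv_le_abs_abundancy_sub {p q m : ℕ} (hp : p.Prime) (hq : q.Prime)
    (hpm : ¬p ∣ m) (hqm : ¬q ∣ m) :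
    |(p : ℝ)⁻¹ - (q : ℝ)⁻¹| ≤ |abundancy (p * m) - abundancy (q * m)| := by
  have hm : 1 ≤ abundancy m := one_le_abundancy fun h => hpm (h ▸ dvd_zero p)
  rw [abundancy_prime_mul hp hpm, abundancy_prime_mul hq hqm, ← sub_mul, add_sub_add_left_eq_sub,
    abs_mul, abs_of_pos (by linarith : (0 : ℝ) < abundancy m)]
  exact le_mul_of_one_le_right (abs_nonneg _) hm

theorem countUpTo_abundancy_near_not_isPowerfulOn_le {P : Finset ℕ} (hP : ∀ p ∈ P, p.Prime)
    {K : ℕ} (hK : 0 < K) (hPK : ∀ p ∈ P, K ≤ p) {t δ : ℝ}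
    (hsep : ∀ p ∈ P, ∀ q ∈ P, p ≠ q → 2 * δ < |(p : ℝ)⁻¹ - (q : ℝ)⁻¹|) (N : ℕ) :
    countUpTo (fun n => |abundancy n - t| ≤ δ ∧ ¬IsPowerfulOn P n) N ≤ N / K := by
  classical
  have hex : ∀ n, |abundancy n - t| ≤ δ ∧ ¬IsPowerfulOn P n → ∃ p ∈ P, p ∣ n ∧ ¬p ^ 2 ∣ n := by
    rintro n ⟨-, hn⟩
    simpa [IsPowerfulOn] using hn
  choose! q hqP hqn hqsq using hex
  have hfac : ∀ n, |abundancy n - t| ≤ δ ∧ ¬IsPowerfulOn P n →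
      q n * (n / q n) = n ∧ ¬q n ∣ n / q n := fun n hn =>
    ⟨Nat.mul_div_cancel' (hqn n hn), by
      rw [Nat.dvd_div_iff_mul_dvd (hqn n hn), ← pow_two]; exact hqsq n hn⟩
  rw [countUpTo]
  calc _ ≤ #(Icc 1 (N / K)) := card_le_card_of_injOn (fun n => n / q n) ?_ ?_
    _ = N / K := by simp
  · intro n hn
    simp only [coe_filter, mem_Icc, Set.mem_ofPred_eq, mem_coe] at hn ⊢
    obtain ⟨hmul, hndvd⟩ := hfac n hn.2
    refine ⟨Nat.pos_of_ne_zero fun h => hndvd (h ▸ dvd_zero _), (Nat.le_div_iff_mul_le hK).2 ?_⟩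
    calc n / q n * K ≤ n / q n * q n := Nat.mul_le_mul_left _ (hPK _ (hqP n hn.2))
      _ = n := by rw [mul_comm, hmul]
      _ ≤ N := hn.1.2
  · intro n₁ hn₁ n₂ hn₂ heq
    simp only [coe_filter, mem_Icc, Set.mem_ofPred_eq] at hn₁ hn₂ heq
    obtain ⟨hmul₁, hndvd₁⟩ := hfac n₁ hn₁.2
    obtain ⟨hmul₂, hndvd₂⟩ := hfac n₂ hn₂.2
    by_cases hq : q n₁ = q n₂
    · rw [← hmul₁, ← hmul₂, heq, hq]
    rw [heq] at hmul₁ hndvd₁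
    have hsep' := (hsep _ (hqP n₁ hn₁.2) _ (hqP n₂ hn₂.2) hq).trans_le
      (abs_inv_sub_inv_le_abs_abundancy_sub (hP _ (hqP n₁ hn₁.2)) (hP _ (hqP n₂ hn₂.2))
        hndvd₁ hndvd₂)
    rw [hmul₁, hmul₂] at hsep'
    have := (abs_sub_le _ t _).trans (add_le_add hn₁.2.1 ((abs_sub_comm t _).trans_le hn₂.2.1))
    linarith

theorem densityUpTo_abundancy_near_not_isPowerfulOn_le {P : Finset ℕ} (hP : ∀ p ∈ P, p.Prime)
    {K : ℕ} (hK : 0 < K) (hPK : ∀ p ∈ P, K ≤ p) {t δ : ℝ}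
    (hsep : ∀ p ∈ P, ∀ q ∈ P, p ≠ q → 2 * δ < |(p : ℝ)⁻¹ - (q : ℝ)⁻¹|) (N : ℕ) :
    densityUpTo (fun n => |abundancy n - t| ≤ δ ∧ ¬IsPowerfulOn P n) N ≤ (K : ℝ)⁻¹ := by
  refine div_le_of_le_mul₀ (Nat.cast_nonneg _) (by positivity) ?_
  calc (countUpTo _ N : ℝ) ≤ ((N / K : ℕ) : ℝ) := by
        exact_mod_cast countUpTo_abundancy_near_not_isPowerfulOn_le hP hK hPK hsep N
    _ ≤ N / K := Nat.cast_div_le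
    _ = (K : ℝ)⁻¹ * N := by ring

theorem hasNoAtoms_abundancy : HasNoAtoms abundancy := by
  intro t ε hε
  obtain ⟨K, hK⟩ := exists_nat_gt (2 / ε)
  have hKpos : (0 : ℝ) < K := (by positivity : (0 : ℝ) < 2 / ε).trans hK
  have hKε : (K : ℝ)⁻¹ ≤ ε / 2 := by
    rw [inv_le_comm₀ hKpos (half_pos hε), inv_div]
    exact hK.le
  obtain ⟨P, hP, hbad⟩ := exists_primes_density_isPowerfulOn_lt K (half_pos hε)
  obtain ⟨δ, hδ, hsep⟩ := Finset.exists_pos_forall_lt P.offDiag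
    (f := fun x => |(x.1 : ℝ)⁻¹ - (x.2 : ℝ)⁻¹| / 2) fun x hx => by
      have : (x.1 : ℝ)⁻¹ ≠ (x.2 : ℝ)⁻¹ := by simpa using (mem_offDiag.1 hx).2.2
      exact half_pos (abs_pos.2 (sub_ne_zero.2 this))
  have hgood := densityUpTo_abundancy_near_not_isPowerfulOn_le (fun p hp => (hP p hp).1)
    (Nat.cast_pos.1 hKpos) (fun p hp => (hP p hp).2) (t := t) (δ := δ)
    (fun p hp q hq hpq => by
      have h := hsep (p, q) (mem_offDiag.2 ⟨hp, hq, hpq⟩)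
      dsimp only at h
      linarith)
  have hM : 0 < ∏ p ∈ P, p ^ 2 := prod_pos fun p hp => pow_pos (hP p hp).1.pos 2
  refine ⟨δ, hδ, ?_⟩
  filter_upwards [(tendsto_densityUpTo_of_periodic (isPowerfulOn_periodic P) hM).eventually
    (eventually_lt_nhds hbad)] with N hN
  calc densityUpTo (fun n => |abundancy n - t| ≤ δ) N
      ≤ densityUpTo (IsPowerfulOn P) N +
        densityUpTo (fun n => |abundancy n - t| ≤ δ ∧ ¬IsPowerfulOn P n) N :=
        densityUpTo_le_add (fun n _ h => (em _).imp_right fun h' => ⟨h, h'⟩) N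
    _ ≤ ε := by linarith [hgood N]

end Atoms

section SigmaRatio

theorem isPeriodicallyApproximable_sigmaRatio : IsPeriodicallyApproximable sigmaRatio := by
  intro δ ε hδ hε
  obtain ⟨y, hy⟩ := exists_nat_gt (2 / (δ * ε))
  have hy0 : (0 : ℝ) < y := (by positivity : (0 : ℝ) < 2 / (δ * ε)).trans hy
  refine ⟨fun n => (truncatedAbundancy y n)⁻¹, y.factorial, y.factorial_pos,
    (truncatedAbundancy_periodic y).comp _, .of_forall fun N => ?_⟩
  have hincl := densityUpTo_mono (T := fun n => δ ≤ abundancy n - truncatedAbundancy y n)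
    (S := fun n => δ < |sigmaRatio n - (truncatedAbundancy y n)⁻¹|) (fun n hn h => by
      rw [sigmaRatio_eq_inv_abundancy] at h
      exact h.le.trans (abs_inv_sub_inv_le_sub (one_le_truncatedAbundancy (Nat.cast_pos.1 hy0) n)
        (truncatedAbundancy_le_abundancy hn.ne' y))) N
  have hmarkov := densityUpTo_mul_le_sum_div (h := fun n => abundancy n - truncatedAbundancy y n)
    (fun n hn => sub_nonneg.2 (truncatedAbundancy_le_abundancy hn.ne' y)) δ N
  have hsum : (∑ n ∈ Icc 1 N, (abundancy n - truncatedAbundancy y n)) / N ≤ 2 / (y + 1) :=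
    div_le_of_le_mul₀ (Nat.cast_nonneg _) (by positivity)
      (sum_abundancy_sub_truncatedAbundancy_le y N)
  have hy' : 2 / ((y : ℝ) + 1) ≤ ε * δ := by
    rw [div_lt_iff₀ (by positivity)] at hy
    rw [div_le_iff₀ (by positivity)]
    nlinarith
  exact hincl.trans (le_of_mul_le_mul_right (hmarkov.trans (hsum.trans hy')) hδ)

theorem hasNoAtoms_sigmaRatio : HasNoAtoms sigmaRatio := by
  intro u ε hε
  rcases le_or_gt u 0 with hu | hu
  · refine ⟨ε / 2, half_pos hε, .of_forall fun N => ?_⟩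
    have hincl := densityUpTo_mono (T := fun n => (ε / 2)⁻¹ ≤ abundancy n)
      (S := fun n => |sigmaRatio n - u| ≤ ε / 2) (fun n hn h => by
        have hg := one_le_abundancy hn.ne'
        rw [sigmaRatio_eq_inv_abundancy] at h
        exact (inv_le_comm₀ (by linarith) (half_pos hε)).1 (by linarith [(abs_le.1 h).2])) N
    have hmarkov := densityUpTo_mul_le_sum_div (h := abundancy)
      (fun n hn => zero_le_one.trans (one_le_abundancy hn.ne')) (ε / 2)⁻¹ N
    have hsum : (∑ n ∈ Icc 1 N, abundancy n) / N ≤ 2 :=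
      div_le_of_le_mul₀ (Nat.cast_nonneg _) zero_le_two (sum_abundancy_le N)
    have hε2 : 2 ≤ ε * (ε / 2)⁻¹ := by rw [inv_div, mul_div_cancel₀ _ hε.ne']
    exact hincl.trans (le_of_mul_le_mul_right (hmarkov.trans (hsum.trans hε2))
      (inv_pos.2 (half_pos hε)))
  · obtain ⟨δ, hδ, hatom⟩ := hasNoAtoms_abundancy u⁻¹ ε hε
    refine ⟨min (u / 2) (δ * u ^ 2 / 2), by positivity, ?_⟩
    filter_upwards [hatom] with N hN
    refine (densityUpTo_mono (fun n _ hn => ?_) N).trans hN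
    have h := abs_inv_sub_inv_le_of_abs_sub_le hu (min_le_left _ _) hn
    rw [sigmaRatio_eq_inv_abundancy, inv_inv] at h
    calc |abundancy n - u⁻¹| ≤ 2 * min (u / 2) (δ * u ^ 2 / 2) / u ^ 2 := h
      _ ≤ 2 * (δ * u ^ 2 / 2) / u ^ 2 := by gcongr; exact min_le_right _ _
      _ = δ := by field_simp

theorem two_mul_lt_sigma_iff {n : ℕ} (hn : 0 < n) : 2 * n < sigma 1 n ↔ sigmaRatio n < 2⁻¹ := by
  have hσ : (0 : ℝ) < (sigma 1 n : ℕ) := by exact_mod_cast sigma_pos 1 n hn.ne'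
  rw [sigmaRatio, div_lt_iff₀ hσ, ← Nat.cast_lt (α := ℝ)]
  push_cast
  constructor <;> intro h <;> linarith

end SigmaRatio

end Davenport

open Davenport in
theorem davenport_theorem :
    (∃ D : ℝ → ℝ, ContinuousOn D (Set.Icc 0 1) ∧
      ∀ u ∈ Set.Icc (0 : ℝ) 1,
        Tendsto (fun N : ℕ =>
            (((Finset.Icc 1 N).filter (fun n : ℕ => sigmaRatio n ≤ u)).card : ℝ) / N)
          atTop (nhds (D u))) ∧
    ∃ d : ℝ, Tendsto (fun N : ℕ =>
        (((Finset.Icc 1 N).filter (fun n : ℕ => 2 * n < sigma 1 n)).card : ℝ) / N)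
      atTop (nhds d) := by
  have hφ := isPeriodicallyApproximable_sigmaRatio
  have hf := hasNoAtoms_sigmaRatio
  refine ⟨⟨distribution sigmaRatio, (continuous_distribution hφ hf).continuousOn, fun u _ => ?_⟩,
    distribution sigmaRatio 2⁻¹, ?_⟩
  · simpa only [densityUpTo_eq_card_div] using tendsto_densityUpTo_le_distribution hφ hf u
  · have h := tendsto_densityUpTo_lt_distribution hφ hf 2⁻¹
    rwa [← densityUpTo_congr fun n hn => two_mul_lt_sigma_iff hn, densityUpTo_eq_card_div] at h
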